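/- arXiv:2103.16232 — 3 statements merged into one kernel-verified Lean document; each statement's English description precedes it below -/
import Mathlib

section
/- Suppose L_F and L_R are Lipschitz moduli of F and R on Ω_θ and β > L_F + L_R. If z̄ ∈ Z satisfies O(z̄) < θ and z̄ is a d-stationary point of O over Z, then z̄ ∈ Ω₁, i.e. v̄ₙ = (W̄xₙ + b̄₁)₊ for all n = 1,…,N. -/
open scoped BigOperators

noncomputable section

/-- A point `z = (W, b₁, b₂, V)`. -/
abbrev Pt (N N₀ N₁ : ℕ) : Type :=
  Matrix (Fin N₁) (Fin N₀) ℝ × (Fin N₁ → ℝ) × (Fin N₀ → ℝ) × Matrix (Fin N₁) (Fin N) ℝ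

/-- ReLU: positive part. -/
def relu (y : ℝ) : ℝ := max y 0

variable {N N₀ N₁ : ℕ}

/-- squared Euclidean norm of a point `z = (W,b₁,b₂,V)`. -/
def sqnormPt (z : Pt N N₀ N₁) : ℝ :=
  (∑ i, ∑ j, (z.1 i j) ^ 2) + (∑ i, (z.2.1 i) ^ 2) + (∑ j, (z.2.2.1 j) ^ 2)
    + (∑ i, ∑ n, (z.2.2.2 i n) ^ 2)

/-- Euclidean norm of a point. -/
def normPt (z : Pt N N₀ N₁) : ℝ := Real.sqrt (sqnormPt z)

/-- Euclidean distance between points. -/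
def distPt (z z' : Pt N N₀ N₁) : ℝ := normPt (z - z')

/-- `(W xₙ + b₁)ᵢ`. -/
def preact (X : Matrix (Fin N₀) (Fin N) ℝ) (z : Pt N N₀ N₁) (i : Fin N₁) (n : Fin N) : ℝ :=
  (∑ j, z.1 i j * X j n) + z.2.1 i

/-- `(Wᵀ vₙ + b₂)ⱼ`. -/
def outPre (z : Pt N N₀ N₁) (j : Fin N₀) (n : Fin N) : ℝ :=
  (∑ i, z.1 i j * z.2.2.2 i n) + z.2.2.1 j

/-- fidelity term `F(z)`. -/
def Fv (X : Matrix (Fin N₀) (Fin N) ℝ) (z : Pt N N₀ N₁) : ℝ :=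
  (1 / (N : ℝ)) * ∑ n, ∑ j, (relu (outPre z j n) - X j n) ^ 2

/-- regularization term `R(z)`. -/
def Rv (lam₁ lam₂ : ℝ) (z : Pt N N₀ N₁) : ℝ :=
  lam₁ * (∑ n, ∑ i, z.2.2.2 i n) + lam₂ * ∑ i, ∑ j, (z.1 i j) ^ 2

/-- penalty term `P(z)`. -/
def Pv (β : ℝ) (X : Matrix (Fin N₀) (Fin N) ℝ) (z : Pt N N₀ N₁) : ℝ :=
  β * ∑ n, ∑ i, (z.2.2.2 i n - relu (preact X z i n))

/-- objective `O(z) = F(z) + R(z) + P(z)`. -/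
def Ov (lam₁ lam₂ β : ℝ) (X : Matrix (Fin N₀) (Fin N) ℝ) (z : Pt N N₀ N₁) : ℝ :=
  Fv X z + Rv lam₁ lam₂ z + Pv β X z

/-- `Ω₁ = {z : vₙ = (Wxₙ + b₁)₊}`. -/
def Omega1 (X : Matrix (Fin N₀) (Fin N) ℝ) : Set (Pt N N₀ N₁) :=
  {z | ∀ i n, z.2.2.2 i n = relu (preact X z i n)}

/-- `Ω₂ = {z : vₙ ≥ (Wxₙ + b₁)₊}`. -/
def Omega2 (X : Matrix (Fin N₀) (Fin N) ℝ) : Set (Pt N N₀ N₁) :=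
  {z | ∀ i n, relu (preact X z i n) ≤ z.2.2.2 i n}

/-- level set `Ω_θ = {z ∈ Ω₂ : O(z) ≤ θ}` (also used for `Ω_δ`). -/
def OmegaLev (lam₁ lam₂ β θ : ℝ) (X : Matrix (Fin N₀) (Fin N) ℝ) : Set (Pt N N₀ N₁) :=
  {z | z ∈ Omega2 X ∧ Ov lam₁ lam₂ β X z ≤ θ}

/-- `‖X‖₁`: maximum absolute column sum. -/
def Xcol1 (X : Matrix (Fin N₀) (Fin N) ℝ) : ℝ := ⨆ n, ∑ j, |X j n|

/-- the constant `α`. -/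
def alphaC (N N₀ N₁ : ℕ) (lam₁ lam₂ θ : ℝ) (X : Matrix (Fin N₀) (Fin N) ℝ) : ℝ :=
  max (θ / lam₁ + Real.sqrt ((N₁ : ℝ) * (N₀ : ℝ) * θ / lam₂) * Xcol1 X)
      (θ * Real.sqrt ((N₁ : ℝ) * (N₀ : ℝ) * θ) / (lam₁ * Real.sqrt lam₂)
        + Real.sqrt ((N : ℝ) * θ) + Xcol1 X)

/-- `Ω₃ = {z : ‖b₁‖_∞ ≤ α, ‖b₂‖_∞ ≤ α}`. -/
def Omega3 (lam₁ lam₂ θ : ℝ) (X : Matrix (Fin N₀) (Fin N) ℝ) : Set (Pt N N₀ N₁) :=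
  {z | (∀ i, |z.2.1 i| ≤ alphaC N N₀ N₁ lam₁ lam₂ θ X) ∧
       (∀ j, |z.2.2.1 j| ≤ alphaC N N₀ N₁ lam₁ lam₂ θ X)}

/-- `Z = Ω₂ ∩ Ω₃`. -/
def Zset (lam₁ lam₂ θ : ℝ) (X : Matrix (Fin N₀) (Fin N) ℝ) : Set (Pt N N₀ N₁) :=
  Omega2 X ∩ Omega3 lam₁ lam₂ θ X

/-- tangent cone of `C` at `zb`. -/
def TangentCone (C : Set (Pt N N₀ N₁)) (zb : Pt N N₀ N₁) : Set (Pt N N₀ N₁) :=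
  {d | ∃ zs : ℕ → Pt N N₀ N₁, ∃ ts : ℕ → ℝ,
      (∀ k, zs k ∈ C) ∧ (∀ k, 0 < ts k) ∧
      Filter.Tendsto ts Filter.atTop (nhds 0) ∧
      Filter.Tendsto (fun k => distPt (zs k) zb) Filter.atTop (nhds 0) ∧
      Filter.Tendsto (fun k => normPt ((ts k)⁻¹ • (zs k - zb) - d)) Filter.atTop (nhds 0)}

/-- `zb` is a d-stationary point of `f` over `C`:
`liminf_{t↓0} (f(zb + t d) - f(zb))/t ≥ 0` for every tangent direction `d`. -/
def DStationary (f : Pt N N₀ N₁ → ℝ) (C : Set (Pt N N₀ N₁)) (zb : Pt N N₀ N₁) : Prop :=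
  zb ∈ C ∧ ∀ d ∈ TangentCone C zb, ∀ ε : ℝ, 0 < ε → ∃ δ : ℝ, 0 < δ ∧
    ∀ t : ℝ, 0 < t → t < δ → -ε < (f (zb + t • d) - f zb) / t

/-- smoothing function `s_μ` of the ReLU. -/
def smoothRelu (μ y : ℝ) : ℝ :=
  if y < 0 then 0 else if y ≤ μ then y ^ 2 / (2 * μ) else y - μ / 2

/-- smoothed fidelity term `F̃(z, μ)`. -/
def Ftil (X : Matrix (Fin N₀) (Fin N) ℝ) (z : Pt N N₀ N₁) (μ : ℝ) : ℝ :=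
  (1 / (N : ℝ)) * (∑ n, ∑ j, (relu (outPre z j n)) ^ 2)
    + (1 / (N : ℝ)) * (∑ j, ∑ n, (X j n) ^ 2)
    - (2 / (N : ℝ)) * ∑ n, ∑ j, X j n * smoothRelu μ (outPre z j n)

/-- smoothed penalty term `P̃(z, μ)`. -/
def Ptil (β : ℝ) (X : Matrix (Fin N₀) (Fin N) ℝ) (z : Pt N N₀ N₁) (μ : ℝ) : ℝ :=
  β * ∑ n, ∑ i, (z.2.2.2 i n - smoothRelu μ (preact X z i n))

/-- smoothed objective `Õ(z, μ)`. -/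
def Otil (lam₁ lam₂ β : ℝ) (X : Matrix (Fin N₀) (Fin N) ℝ) (z : Pt N N₀ N₁) (μ : ℝ) : ℝ :=
  Ftil X z μ + Ptil β X z μ + Rv lam₁ lam₂ z

/-! If some `v̄ᵢₙ` exceeds `((W̄xₙ + b̄₁)₊)ᵢ`, lowering that single entry keeps the point in `Z`,
leaves `W, b₁, b₂` and hence all preactivations unchanged, and decreases the penalty `P` at the
exact rate `β`, while `F + R` can grow at rate at most `L_F + L_R` as long as the point stays in
the level set `Ω_θ`, which it does for small steps since `O(z̄) < θ`. As `β > L_F + L_R`, this is a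
descent direction of slope `-(β - L_F - L_R)`, contradicting d-stationarity. -/

lemma normPt_smul (t : ℝ) (z : Pt N N₀ N₁) : normPt (t • z) = |t| * normPt z := by
  have hsq : sqnormPt (t • z) = t ^ 2 * sqnormPt z := by
    simp only [sqnormPt, Prod.smul_fst, Prod.smul_snd, Matrix.smul_apply, Pi.smul_apply,
      smul_eq_mul, mul_pow, ← Finset.mul_sum]
    ring
  rw [normPt, hsq, Real.sqrt_mul (sq_nonneg t), Real.sqrt_sq_eq_abs, normPt]

lemma normPt_zero : normPt (0 : Pt N N₀ N₁) = 0 := by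
  simp [normPt, sqnormPt]

lemma continuous_Ov (lam₁ lam₂ β : ℝ) (X : Matrix (Fin N₀) (Fin N) ℝ) :
    Continuous (Ov lam₁ lam₂ β X : Pt N N₀ N₁ → ℝ) := by
  unfold Ov Fv Rv Pv relu outPre preact
  fun_prop

lemma exists_forall_Ov_sub_smul_lt {lam₁ lam₂ β θ : ℝ} {X : Matrix (Fin N₀) (Fin N) ℝ}
    {z : Pt N N₀ N₁} (w : Pt N N₀ N₁) (hz : Ov lam₁ lam₂ β X z < θ) :
    ∃ τ > 0, ∀ t : ℝ, |t| < τ → Ov lam₁ lam₂ β X (z - t • w) < θ := by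
  have hcont : Continuous fun t : ℝ => Ov lam₁ lam₂ β X (z - t • w) :=
    (continuous_Ov lam₁ lam₂ β X).comp (by fun_prop)
  obtain ⟨τ, hτ, hlt⟩ := Metric.eventually_nhds_iff.mp
    (hcont.continuousAt.eventually_lt continuousAt_const (by rwa [zero_smul, sub_zero]))
  exact ⟨τ, hτ, fun t ht => hlt (by rwa [Real.dist_0_eq_abs])⟩

lemma mem_TangentCone_of_forall_mem {C : Set (Pt N N₀ N₁)} {zb d : Pt N N₀ N₁} {c : ℝ}
    (hc : 0 < c) (hC : ∀ t, 0 ≤ t → t ≤ c → zb + t • d ∈ C) : d ∈ TangentCone C zb := by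
  have hts : Filter.Tendsto (fun k : ℕ => c / ((k : ℝ) + 1)) Filter.atTop (nhds 0) := by
    simpa [div_eq_mul_inv, mul_comm, one_div] using
      tendsto_one_div_add_atTop_nhds_zero_nat.const_mul c
  have hpos : ∀ k : ℕ, 0 < c / ((k : ℝ) + 1) := fun k => by positivity
  refine ⟨fun k => zb + (c / ((k : ℝ) + 1)) • d, fun k => c / ((k : ℝ) + 1),
    fun k => hC _ (hpos k).le (div_le_self hc.le (by simp)), hpos, hts, ?_, ?_⟩
  · have hd : ∀ k : ℕ, distPt (zb + (c / ((k : ℝ) + 1)) • d) zb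
        = c / ((k : ℝ) + 1) * normPt d := fun k => by
      rw [distPt, add_sub_cancel_left, normPt_smul, abs_of_pos (hpos k)]
    simpa only [hd, zero_mul] using hts.mul_const (normPt d)
  · simp only [add_sub_cancel_left, smul_smul, inv_mul_cancel₀ (hpos _).ne', one_smul, sub_self,
      normPt_zero, tendsto_const_nhds]

lemma DStationary.false_of_descent {f : Pt N N₀ N₁ → ℝ} {C : Set (Pt N N₀ N₁)}
    {zb d : Pt N N₀ N₁} {ε τ : ℝ} (hds : DStationary f C zb) (hd : d ∈ TangentCone C zb)
    (hε : 0 < ε) (hτ : 0 < τ)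
    (hdesc : ∀ t, 0 < t → t < τ → f (zb + t • d) - f zb ≤ -ε * t) : False := by
  obtain ⟨δ, hδ, hquot⟩ := hds.2 d hd ε hε
  obtain ⟨t, ht, htδ, htτ⟩ : ∃ t, 0 < t ∧ t < δ ∧ t < τ :=
    ⟨min δ τ / 2, by positivity, by linarith [min_le_left δ τ, lt_min hδ hτ],
      by linarith [min_le_right δ τ, lt_min hδ hτ]⟩
  have hquot_t := hquot t ht htδ
  rw [lt_div_iff₀ ht] at hquot_t
  linarith [hdesc t ht htτ]

lemma sum_sum_single_apply {m n α : Type*} [Fintype m] [Fintype n] [DecidableEq m]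
    [DecidableEq n] [AddCommMonoid α] (i : m) (j : n) (a : α) :
    ∑ j', ∑ i', Matrix.single i j a i' j' = a := by
  simp [Matrix.single_apply, ite_and, Finset.sum_ite_eq]

section LowerEntry

variable (i : Fin N₁) (n : Fin N)

def unitV : Pt N N₀ N₁ := (0, 0, 0, Matrix.single i n 1)

lemma normPt_unitV : normPt (unitV i n : Pt N N₀ N₁) = 1 := by
  simp [normPt, sqnormPt, unitV, Matrix.single_apply, ite_and]

variable (X : Matrix (Fin N₀) (Fin N) ℝ) (z : Pt N N₀ N₁) (t : ℝ)

lemma preact_sub_smul_unitV : preact X (z - t • unitV i n) = preact X z := by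
  ext i' n'
  simp [preact, unitV]

lemma sub_smul_unitV_apply (i' : Fin N₁) (n' : Fin N) :
    (z - t • unitV i n).2.2.2 i' n' = z.2.2.2 i' n' - Matrix.single i n t i' n' := by
  simp [unitV]

lemma Pv_sub_smul_unitV (β : ℝ) : Pv β X (z - t • unitV i n) = Pv β X z - β * t := by
  simp only [Pv, preact_sub_smul_unitV, sub_smul_unitV_apply,
    sub_right_comm _ (Matrix.single i n t _ _), Finset.sum_sub_distrib, sum_sum_single_apply]
  ring

lemma distPt_sub_smul_unitV (ht : 0 ≤ t) : distPt (z - t • unitV i n) z = t := by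
  rw [distPt, sub_sub_cancel_left, ← neg_smul, normPt_smul, normPt_unitV, abs_neg,
    abs_of_nonneg ht, mul_one]

variable {lam₁ lam₂ θ : ℝ} {X z t}

lemma Ov_sub_smul_unitV_sub_le {β LF LR : ℝ} (ht : 0 ≤ t)
    (hF : |Fv X (z - t • unitV i n) - Fv X z| ≤ LF * distPt (z - t • unitV i n) z)
    (hR : |Rv lam₁ lam₂ (z - t • unitV i n) - Rv lam₁ lam₂ z| ≤
      LR * distPt (z - t • unitV i n) z) :
    Ov lam₁ lam₂ β X (z - t • unitV i n) - Ov lam₁ lam₂ β X z ≤ -(β - (LF + LR)) * t := by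
  rw [distPt_sub_smul_unitV i n z t ht] at hF hR
  simp only [Ov, Pv_sub_smul_unitV]
  linarith [(abs_le.mp hF).2, (abs_le.mp hR).2]

lemma sub_smul_unitV_mem_Zset (hz : z ∈ Zset lam₁ lam₂ θ X)
    (ht : t ≤ z.2.2.2 i n - relu (preact X z i n)) :
    z - t • unitV i n ∈ Zset lam₁ lam₂ θ X := by
  refine ⟨fun i' n' => ?_, by simpa [Omega3, unitV] using hz.2⟩
  rw [preact_sub_smul_unitV, sub_smul_unitV_apply]
  by_cases h : i = i' ∧ n = n'
  · obtain ⟨rfl, rfl⟩ := h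
    rw [Matrix.single_apply_same]
    linarith
  · rw [Matrix.single_apply_of_ne _ _ _ _ _ h, sub_zero]
    exact hz.1 i' n'

end LowerEntry

theorem stmt12_general (N N₀ N₁ : ℕ)
    (lam₁ lam₂ β θ : ℝ)
    (X : Matrix (Fin N₀) (Fin N) ℝ)
    (LF LR : ℝ)
    (hLipF : ∀ z : Pt N N₀ N₁, z ∈ OmegaLev lam₁ lam₂ β θ X →
      ∀ z' : Pt N N₀ N₁, z' ∈ OmegaLev lam₁ lam₂ β θ X →
        |Fv X z - Fv X z'| ≤ LF * distPt z z')
    (hLipR : ∀ z : Pt N N₀ N₁, z ∈ OmegaLev lam₁ lam₂ β θ X →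
      ∀ z' : Pt N N₀ N₁, z' ∈ OmegaLev lam₁ lam₂ β θ X →
        |Rv lam₁ lam₂ z - Rv lam₁ lam₂ z'| ≤ LR * distPt z z')
    (hpen : LF + LR < β)
    (zb : Pt N N₀ N₁) (hzbO : Ov lam₁ lam₂ β X zb < θ)
    (hds : DStationary (Ov lam₁ lam₂ β X) (Zset lam₁ lam₂ θ X) zb) :
    zb ∈ Omega1 X := by
  by_contra hnot
  obtain ⟨i, n, hgap⟩ : ∃ i n, relu (preact X zb i n) < zb.2.2.2 i n := by
    simp only [Omega1, Set.mem_ofPred_eq, not_forall] at hnot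
    obtain ⟨i, n, hne⟩ := hnot
    exact ⟨i, n, (hds.1.1 i n).lt_of_ne (Ne.symm hne)⟩
  have hray : ∀ t : ℝ, zb + t • -unitV i n = zb - t • unitV i n := fun t => by
    rw [smul_neg, sub_eq_add_neg]
  have hZ : ∀ t : ℝ, t ≤ zb.2.2.2 i n - relu (preact X zb i n) →
      zb - t • unitV i n ∈ Zset lam₁ lam₂ θ X :=
    fun _ ht => sub_smul_unitV_mem_Zset i n hds.1 ht
  have hT : -unitV i n ∈ TangentCone (Zset lam₁ lam₂ θ X) zb :=
    mem_TangentCone_of_forall_mem (sub_pos.2 hgap) fun t _ ht => hray t ▸ hZ t ht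
  obtain ⟨τ, hτ, hlev⟩ := exists_forall_Ov_sub_smul_lt (unitV i n) hzbO
  refine hds.false_of_descent hT (sub_pos.2 hpen) (lt_min hτ (sub_pos.2 hgap))
    fun t ht htτ => ?_
  have hzt : zb - t • unitV i n ∈ OmegaLev lam₁ lam₂ β θ X :=
    ⟨(hZ t (htτ.trans_le (min_le_right _ _)).le).1,
      (hlev t (by rw [abs_of_pos ht]; exact htτ.trans_le (min_le_left _ _))).le⟩
  have hzb : zb ∈ OmegaLev lam₁ lam₂ β θ X := ⟨hds.1.1, hzbO.le⟩
  rw [hray]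
  exact Ov_sub_smul_unitV_sub_le i n ht.le (hLipF _ hzt _ hzb) (hLipR _ hzt _ hzb)

theorem stmt12 (N N₀ N₁ : ℕ) (hN : 0 < N) (hN₀ : 0 < N₀) (hN₁ : 0 < N₁)
    (lam₁ lam₂ β θ : ℝ) (hlam₁ : 0 < lam₁) (hlam₂ : 0 < lam₂) (hbeta : 0 < β)
    (X : Matrix (Fin N₀) (Fin N) ℝ)
    (hθ : (1 / (N : ℝ)) * ∑ j, ∑ n, (X j n) ^ 2 < θ)
    (LF LR : ℝ) (hLF : 0 ≤ LF) (hLR : 0 ≤ LR)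
    (hLipF : ∀ z : Pt N N₀ N₁, z ∈ OmegaLev lam₁ lam₂ β θ X →
      ∀ z' : Pt N N₀ N₁, z' ∈ OmegaLev lam₁ lam₂ β θ X →
        |Fv X z - Fv X z'| ≤ LF * distPt z z')
    (hLipR : ∀ z : Pt N N₀ N₁, z ∈ OmegaLev lam₁ lam₂ β θ X →
      ∀ z' : Pt N N₀ N₁, z' ∈ OmegaLev lam₁ lam₂ β θ X →
        |Rv lam₁ lam₂ z - Rv lam₁ lam₂ z'| ≤ LR * distPt z z')
    (hpen : LF + LR < β)
    (zb : Pt N N₀ N₁) (hzbO : Ov lam₁ lam₂ β X zb < θ)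
    (hds : DStationary (Ov lam₁ lam₂ β X) (Zset lam₁ lam₂ θ X) zb) :
    zb ∈ Omega1 X :=
  stmt12_general N N₀ N₁ lam₁ lam₂ β θ X LF LR hLipF hLipR hpen zb hzbO hds
end
end

section
/- Suppose all entries of X are nonnegative. Then for every z ∈ Ω₂ and every μ > 0: 0 ≤ O(z) ≤ Õ(z, μ) ≤ O(z) + (‖X‖₁ + N₁Nβ)μ. -/
open scoped BigOperators

noncomputable section

variable {N N₀ N₁ : ℕ}

/-!
On `Ω₂` every `vₙ` dominates `(Wxₙ + b₁)₊ ≥ 0`, so `R` and `P` are nonnegative, and `F` is a sum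
of squares. Expanding the square in `F`, the objectives `O` and `Õ` differ only in that `y₊` is
replaced by `σ̃(y, μ)` in terms that are linear in it, with coefficients `2xₙ/N ≥ 0` in `F` and `β`
in `P`. Since `0 ≤ y₊ - σ̃(y, μ) ≤ μ/2`, the gap `Õ - O` is nonnegative and at most
`(2/N)·N·‖X‖₁·μ/2 + β·N·N₁·μ/2`.
-/

open Finset

lemma relu_nonneg (y : ℝ) : 0 ≤ relu y := le_max_right y 0

lemma relu_sub_smoothRelu_nonneg {μ : ℝ} (hμ : 0 < μ) (y : ℝ) :
    0 ≤ relu y - smoothRelu μ y := by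
  unfold relu smoothRelu
  split_ifs with hneg hle
  · simp [max_eq_right hneg.le]
  · push Not at hneg
    rw [max_eq_left hneg, sub_nonneg, div_le_iff₀ (by positivity)]
    nlinarith
  · push Not at hneg hle
    rw [max_eq_left hneg]
    linarith

lemma relu_sub_smoothRelu_le {μ : ℝ} (hμ : 0 < μ) (y : ℝ) :
    relu y - smoothRelu μ y ≤ μ / 2 := by
  unfold relu smoothRelu
  split_ifs with hneg hle
  · rw [max_eq_right hneg.le, sub_zero]
    positivity
  · push Not at hneg
    rw [max_eq_left hneg, sub_le_iff_le_add, ← sub_le_iff_le_add',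
      le_div_iff₀ (by positivity)]
    nlinarith [sq_nonneg (y - μ)]
  · push Not at hneg hle
    rw [max_eq_left hneg]
    linarith

lemma sum_abs_le_Xcol1 {N N₀ : ℕ} (X : Matrix (Fin N₀) (Fin N) ℝ) (n : Fin N) :
    ∑ j, |X j n| ≤ Xcol1 X :=
  le_ciSup (f := fun n => ∑ j, |X j n|) (Set.finite_range _).bddAbove n

section Objective

variable {N N₀ N₁ : ℕ} {X : Matrix (Fin N₀) (Fin N) ℝ} {z : Pt N N₀ N₁}

lemma nonneg_of_mem_Omega2 (hz : z ∈ Omega2 X) (i : Fin N₁) (n : Fin N) : 0 ≤ z.2.2.2 i n :=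
  (relu_nonneg _).trans (hz i n)

lemma Fv_nonneg : 0 ≤ Fv X z := by
  unfold Fv
  positivity

lemma Rv_nonneg {lam₁ lam₂ : ℝ} (hlam₁ : 0 ≤ lam₁) (hlam₂ : 0 ≤ lam₂)
    (hv : ∀ i n, 0 ≤ z.2.2.2 i n) : 0 ≤ Rv lam₁ lam₂ z := by
  unfold Rv
  have hV : 0 ≤ ∑ n, ∑ i, z.2.2.2 i n :=
    sum_nonneg fun n _ => sum_nonneg fun i _ => hv i n
  positivity

lemma Pv_nonneg {β : ℝ} (hβ : 0 ≤ β) (hz : z ∈ Omega2 X) : 0 ≤ Pv β X z :=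
  mul_nonneg hβ <| sum_nonneg fun n _ => sum_nonneg fun i _ => sub_nonneg.mpr (hz i n)

lemma Ov_nonneg {lam₁ lam₂ β : ℝ} (hlam₁ : 0 ≤ lam₁) (hlam₂ : 0 ≤ lam₂) (hβ : 0 ≤ β)
    (hz : z ∈ Omega2 X) : 0 ≤ Ov lam₁ lam₂ β X z :=
  add_nonneg (add_nonneg Fv_nonneg (Rv_nonneg hlam₁ hlam₂ (nonneg_of_mem_Omega2 hz)))
    (Pv_nonneg hβ hz)

lemma Ftil_sub_Fv (μ : ℝ) : Ftil X z μ - Fv X z =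
    (2 / (N : ℝ)) * ∑ n, ∑ j, X j n * (relu (outPre z j n) - smoothRelu μ (outPre z j n)) := by
  have hexpand : ∑ n, ∑ j, (relu (outPre z j n) - X j n) ^ 2
      = ∑ n, ∑ j, relu (outPre z j n) ^ 2 - 2 * ∑ n, ∑ j, X j n * relu (outPre z j n)
        + ∑ n, ∑ j, X j n ^ 2 := by
    simp only [mul_sum, ← sum_sub_distrib, ← sum_add_distrib]
    exact sum_congr rfl fun n _ => sum_congr rfl fun j _ => by ring
  unfold Ftil Fv
  rw [hexpand, sum_comm (f := fun j n => X j n ^ 2)]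
  simp only [mul_sub, sum_sub_distrib]
  ring

lemma Ptil_sub_Pv (β μ : ℝ) : Ptil β X z μ - Pv β X z =
    β * ∑ n, ∑ i, (relu (preact X z i n) - smoothRelu μ (preact X z i n)) := by
  unfold Ptil Pv
  rw [← mul_sub, ← sum_sub_distrib]
  congr 1
  exact sum_congr rfl fun n _ => by rw [← sum_sub_distrib]; exact sum_congr rfl fun i _ => by ring

variable {μ : ℝ}

lemma Ftil_sub_Fv_nonneg (hX : ∀ j n, 0 ≤ X j n) (hμ : 0 < μ) : 0 ≤ Ftil X z μ - Fv X z := by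
  rw [Ftil_sub_Fv]
  exact mul_nonneg (by positivity) <| sum_nonneg fun n _ => sum_nonneg fun j _ =>
    mul_nonneg (hX j n) (relu_sub_smoothRelu_nonneg hμ _)

lemma Ftil_sub_Fv_le (hN : 0 < N) (hX : ∀ j n, 0 ≤ X j n) (hμ : 0 < μ) :
    Ftil X z μ - Fv X z ≤ Xcol1 X * μ := by
  have hcol : ∀ n, ∑ j, X j n * (relu (outPre z j n) - smoothRelu μ (outPre z j n))
      ≤ Xcol1 X * (μ / 2) := fun n =>
    calc ∑ j, X j n * (relu (outPre z j n) - smoothRelu μ (outPre z j n))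
        ≤ ∑ j, |X j n| * (μ / 2) := sum_le_sum fun j _ => by
          rw [abs_of_nonneg (hX j n)]
          exact mul_le_mul_of_nonneg_left (relu_sub_smoothRelu_le hμ _) (hX j n)
      _ ≤ Xcol1 X * (μ / 2) := by
          rw [← sum_mul]
          exact mul_le_mul_of_nonneg_right (sum_abs_le_Xcol1 X n) (by positivity)
  have hN' : (0 : ℝ) < N := Nat.cast_pos.mpr hN
  calc Ftil X z μ - Fv X z ≤ (2 / (N : ℝ)) * ∑ _n : Fin N, Xcol1 X * (μ / 2) := by
        rw [Ftil_sub_Fv]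
        exact mul_le_mul_of_nonneg_left (sum_le_sum fun n _ => hcol n) (by positivity)
    _ = Xcol1 X * μ := by
        rw [sum_const, card_univ, Fintype.card_fin, nsmul_eq_mul]
        field_simp

lemma Ptil_sub_Pv_nonneg {β : ℝ} (hβ : 0 ≤ β) (hμ : 0 < μ) : 0 ≤ Ptil β X z μ - Pv β X z := by
  rw [Ptil_sub_Pv]
  exact mul_nonneg hβ <| sum_nonneg fun n _ => sum_nonneg fun i _ =>
    relu_sub_smoothRelu_nonneg hμ _

lemma Ptil_sub_Pv_le {β : ℝ} (hβ : 0 ≤ β) (hμ : 0 < μ) :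
    Ptil β X z μ - Pv β X z ≤ N₁ * N * β * (μ / 2) := by
  calc Ptil β X z μ - Pv β X z ≤ β * ∑ _n : Fin N, ∑ _i : Fin N₁, μ / 2 := by
        rw [Ptil_sub_Pv]
        exact mul_le_mul_of_nonneg_left
          (sum_le_sum fun n _ => sum_le_sum fun i _ => relu_sub_smoothRelu_le hμ _) hβ
    _ = N₁ * N * β * (μ / 2) := by
        simp only [sum_const, card_univ, Fintype.card_fin, nsmul_eq_mul]
        ring

lemma Otil_sub_Ov (lam₁ lam₂ β : ℝ) : Otil lam₁ lam₂ β X z μ - Ov lam₁ lam₂ β X z =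
    (Ftil X z μ - Fv X z) + (Ptil β X z μ - Pv β X z) := by
  unfold Otil Ov
  ring

end Objective

theorem stmt16_general (N N₀ N₁ : ℕ) (hN : 0 < N)
    (lam₁ lam₂ β : ℝ) (hlam₁ : 0 < lam₁) (hlam₂ : 0 < lam₂) (hbeta : 0 < β)
    (X : Matrix (Fin N₀) (Fin N) ℝ) (hXnn : ∀ j n, 0 ≤ X j n)
    (z : Pt N N₀ N₁) (hz : z ∈ Omega2 X) (μ : ℝ) (hμ : 0 < μ) :
    0 ≤ Ov lam₁ lam₂ β X z ∧
    Ov lam₁ lam₂ β X z ≤ Otil lam₁ lam₂ β X z μ ∧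
    Otil lam₁ lam₂ β X z μ ≤ Ov lam₁ lam₂ β X z + (Xcol1 X + (N₁ : ℝ) * (N : ℝ) * β) * μ := by
  have hgap := Otil_sub_Ov (X := X) (z := z) (μ := μ) lam₁ lam₂ β
  have hF₀ := Ftil_sub_Fv_nonneg (z := z) hXnn hμ
  have hP₀ := Ptil_sub_Pv_nonneg (X := X) (z := z) hbeta.le hμ
  have hF₁ := Ftil_sub_Fv_le (z := z) hN hXnn hμ
  have hP₁ := Ptil_sub_Pv_le (X := X) (z := z) hbeta.le hμ
  have hPμ : 0 ≤ (N₁ : ℝ) * N * β * μ := by positivity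
  exact ⟨Ov_nonneg hlam₁.le hlam₂.le hbeta.le hz, by linarith, by linarith⟩

theorem stmt16 (N N₀ N₁ : ℕ) (hN : 0 < N) (hN₀ : 0 < N₀) (hN₁ : 0 < N₁)
    (lam₁ lam₂ β : ℝ) (hlam₁ : 0 < lam₁) (hlam₂ : 0 < lam₂) (hbeta : 0 < β)
    (X : Matrix (Fin N₀) (Fin N) ℝ) (hXnn : ∀ j n, 0 ≤ X j n)
    (z : Pt N N₀ N₁) (hz : z ∈ Omega2 X) (μ : ℝ) (hμ : 0 < μ) :
    0 ≤ Ov lam₁ lam₂ β X z ∧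
    Ov lam₁ lam₂ β X z ≤ Otil lam₁ lam₂ β X z μ ∧
    Otil lam₁ lam₂ β X z μ ≤ Ov lam₁ lam₂ β X z + (Xcol1 X + (N₁ : ℝ) * (N : ℝ) * β) * μ :=
  stmt16_general N N₀ N₁ hN lam₁ lam₂ β hlam₁ hlam₂ hbeta X hXnn z hz μ hμ
end
end

section
/- Let N = 2, N₀ = 2, N₁ = 1 with data x₁ = (0, 1)ᵀ and x₂ = (0, 2)ᵀ. Suppose z* = (W*, b₁*, b₂*, V*), with W* = (w₁*, w₂*) ∈ ℝ^{1×2}, b₁* ∈ ℝ, b₂* ∈ ℝ², is a global minimizer of F + R over Ω₁. Define ẑ = (W*, b₁*, b̂₂, V*) where (b̂₂)₂ = (b₂*)₂ and (b̂₂)₁ is any real number with (b̂₂)₁ ≤ min{−w₁*(w₂* + b₁*)₊, −w₁*(2w₂* + b₁*)₊}. Then ẑ is also a global minimizer of F + R over Ω₁. In particular, if F + R attains a global minimum over Ω₁ for this data, its set of global minimizers over Ω₁ is unbounded. -/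
open scoped BigOperators

noncomputable section

variable {N N₀ N₁ : ℕ}

/-! Neither membership in `Ω₁` nor the regulariser depends on the output bias `b₂`, and for the
first coordinate the data row vanishes, so that coordinate contributes `((w₁ vₙ + (b₂)₁)₊)²` to
`F`. Lowering `(b₂)₁` below `-w₁ vₙ` for both samples makes this contribution zero and leaves the
rest of `F` unchanged, so the modified point is again a global minimiser; letting `(b₂)₁ → -∞`
gives minimisers of arbitrarily large norm. -/

open Finset

def withB2 (z : Pt N N₀ N₁) (b : Fin N₀ → ℝ) : Pt N N₀ N₁ := (z.1, z.2.1, b, z.2.2.2)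

theorem withB2_mem_Omega1 {X : Matrix (Fin N₀) (Fin N) ℝ} {z : Pt N N₀ N₁}
    (hz : z ∈ Omega1 X) (b : Fin N₀ → ℝ) : withB2 z b ∈ Omega1 X :=
  hz

theorem Rv_withB2 (lam₁ lam₂ : ℝ) (z : Pt N N₀ N₁) (b : Fin N₀ → ℝ) :
    Rv lam₁ lam₂ (withB2 z b) = Rv lam₁ lam₂ z :=
  rfl

theorem Fv_withB2_le {X : Matrix (Fin N₀) (Fin N) ℝ} {z : Pt N N₀ N₁} {b : Fin N₀ → ℝ}
    (hb : ∀ j, b j = z.2.2.1 j ∨ ∀ n, X j n = 0 ∧ outPre (withB2 z b) j n ≤ 0) :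
    Fv X (withB2 z b) ≤ Fv X z := by
  refine mul_le_mul_of_nonneg_left (sum_le_sum fun n _ => sum_le_sum fun j _ => ?_)
    (by positivity)
  rcases hb j with hbj | hbj
  · simp only [withB2, outPre, hbj, le_refl]
  · obtain ⟨hXj, hout⟩ := hbj n
    rw [hXj, relu, max_eq_right hout, sub_zero, zero_pow two_ne_zero]
    positivity

theorem isMinOn_withB2 {X : Matrix (Fin N₀) (Fin N) ℝ} {lam₁ lam₂ : ℝ} {z : Pt N N₀ N₁}
    {b : Fin N₀ → ℝ} (hz : IsMinOn (fun y => Fv X y + Rv lam₁ lam₂ y) (Omega1 X) z)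
    (hb : ∀ j, b j = z.2.2.1 j ∨ ∀ n, X j n = 0 ∧ outPre (withB2 z b) j n ≤ 0) :
    IsMinOn (fun y => Fv X y + Rv lam₁ lam₂ y) (Omega1 X) (withB2 z b) :=
  isMinOn_iff.2 fun y hy => by
    rw [Rv_withB2]
    linarith [Fv_withB2_le hb, isMinOn_iff.1 hz y hy]

theorem abs_b2_le_normPt (z : Pt N N₀ N₁) (j : Fin N₀) :
    |z.2.2.1 j| ≤ normPt z := by
  rw [normPt, ← Real.sqrt_sq_eq_abs]
  refine Real.sqrt_le_sqrt ?_
  have hj := single_le_sum (f := fun j => z.2.2.1 j ^ 2) (fun _ _ => sq_nonneg _) (mem_univ j)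
  have hW : 0 ≤ ∑ i, ∑ j, z.1 i j ^ 2 := by positivity
  have hb₁ : 0 ≤ ∑ i, z.2.1 i ^ 2 := by positivity
  have hV : 0 ≤ ∑ i, ∑ n, z.2.2.2 i n ^ 2 := by positivity
  unfold sqnormPt
  linarith

theorem hidden_eq_relu_of_mem_Omega1_twoPoint {z : Pt 2 2 1} (hz : z ∈ Omega1 !![0, 0; 1, 2]) :
    z.2.2.2 0 0 = relu (z.1 0 1 + z.2.1 0) ∧ z.2.2.2 0 1 = relu (2 * z.1 0 1 + z.2.1 0) := by
  refine ⟨?_, ?_⟩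
  · simpa [preact, Fin.sum_univ_two] using hz 0 0
  · simpa [preact, Fin.sum_univ_two, mul_comm] using hz 0 1

theorem isMinOn_withB2_twoPoint {lam₁ lam₂ : ℝ} {z : Pt 2 2 1}
    (hz : IsMinOn (fun y => Fv !![0, 0; 1, 2] y + Rv lam₁ lam₂ y) (Omega1 !![0, 0; 1, 2]) z)
    (hz₁ : z ∈ Omega1 !![0, 0; 1, 2]) {b : Fin 2 → ℝ} (hb₁ : b 1 = z.2.2.1 1)
    (hb₀ : b 0 ≤ min (-(z.1 0 0) * relu (z.1 0 1 + z.2.1 0))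
                     (-(z.1 0 0) * relu (2 * z.1 0 1 + z.2.1 0))) :
    IsMinOn (fun y => Fv !![0, 0; 1, 2] y + Rv lam₁ lam₂ y) (Omega1 !![0, 0; 1, 2])
      (withB2 z b) := by
  obtain ⟨hv₀, hv₁⟩ := hidden_eq_relu_of_mem_Omega1_twoPoint hz₁
  have hb₀' := le_min_iff.1 hb₀
  refine isMinOn_withB2 hz (Fin.forall_fin_two.2 ⟨Or.inr (Fin.forall_fin_two.2
    ⟨⟨rfl, ?_⟩, ⟨rfl, ?_⟩⟩), Or.inl hb₁⟩)
  · simp only [outPre, withB2, Fin.sum_univ_one, hv₀]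
    linarith
  · simp only [outPre, withB2, Fin.sum_univ_one, hv₁]
    linarith

theorem stmt19_general (lam₁ lam₂ : ℝ)
    (X : Matrix (Fin 2) (Fin 2) ℝ) (hX : X = !![0, 0; 1, 2])
    (zs : Pt 2 2 1) (hzs1 : zs ∈ Omega1 X)
    (hzsmin : ∀ z : Pt 2 2 1, z ∈ Omega1 X →
      Fv X zs + Rv lam₁ lam₂ zs ≤ Fv X z + Rv lam₁ lam₂ z)
    (b2hat : Fin 2 → ℝ) (hb2' : b2hat 1 = zs.2.2.1 1)
    (hb2 : b2hat 0 ≤ min (-(zs.1 0 0) * relu (zs.1 0 1 + zs.2.1 0))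
                         (-(zs.1 0 0) * relu (2 * zs.1 0 1 + zs.2.1 0)))
    (zh : Pt 2 2 1) (hzh : zh = (zs.1, zs.2.1, b2hat, zs.2.2.2)) :
    (zh ∈ Omega1 X ∧ ∀ z : Pt 2 2 1, z ∈ Omega1 X →
      Fv X zh + Rv lam₁ lam₂ zh ≤ Fv X z + Rv lam₁ lam₂ z) ∧
    ¬ ∃ M : ℝ, ∀ z : Pt 2 2 1,
        (z ∈ Omega1 X ∧ ∀ z' : Pt 2 2 1, z' ∈ Omega1 X →
          Fv X z + Rv lam₁ lam₂ z ≤ Fv X z' + Rv lam₁ lam₂ z') → normPt z ≤ M := by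
  subst hX hzh
  have hmin (b : Fin 2 → ℝ) := isMinOn_withB2_twoPoint (b := b) (isMinOn_iff.2 hzsmin) hzs1
  refine ⟨⟨withB2_mem_Omega1 hzs1 b2hat, isMinOn_iff.1 (hmin _ hb2' hb2)⟩, ?_⟩
  rintro ⟨M, hM⟩
  set c := min (min (-(zs.1 0 0) * relu (zs.1 0 1 + zs.2.1 0))
    (-(zs.1 0 0) * relu (2 * zs.1 0 1 + zs.2.1 0))) (-(|M| + 1))
  have hc : withB2 zs ![c, zs.2.2.1 1] ∈ Omega1 !![0, 0; 1, 2] ∧ _ :=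
    ⟨withB2_mem_Omega1 hzs1 _, isMinOn_iff.1 (hmin ![c, zs.2.2.1 1] rfl (min_le_left _ _))⟩
  have hnorm := (abs_b2_le_normPt (withB2 zs ![c, zs.2.2.1 1]) 0).trans (hM _ hc)
  have hcM : c ≤ -(|M| + 1) := min_le_right _ _
  simp only [withB2, Matrix.cons_val_zero] at hnorm
  linarith [neg_abs_le c, le_abs_self M]

theorem stmt19 (lam₁ lam₂ : ℝ) (hlam₁ : 0 < lam₁) (hlam₂ : 0 < lam₂)
    (X : Matrix (Fin 2) (Fin 2) ℝ) (hX : X = !![0, 0; 1, 2])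
    (zs : Pt 2 2 1) (hzs1 : zs ∈ Omega1 X)
    (hzsmin : ∀ z : Pt 2 2 1, z ∈ Omega1 X →
      Fv X zs + Rv lam₁ lam₂ zs ≤ Fv X z + Rv lam₁ lam₂ z)
    (b2hat : Fin 2 → ℝ) (hb2' : b2hat 1 = zs.2.2.1 1)
    (hb2 : b2hat 0 ≤ min (-(zs.1 0 0) * relu (zs.1 0 1 + zs.2.1 0))
                         (-(zs.1 0 0) * relu (2 * zs.1 0 1 + zs.2.1 0)))
    (zh : Pt 2 2 1) (hzh : zh = (zs.1, zs.2.1, b2hat, zs.2.2.2)) :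
    (zh ∈ Omega1 X ∧ ∀ z : Pt 2 2 1, z ∈ Omega1 X →
      Fv X zh + Rv lam₁ lam₂ zh ≤ Fv X z + Rv lam₁ lam₂ z) ∧
    ¬ ∃ M : ℝ, ∀ z : Pt 2 2 1,
        (z ∈ Omega1 X ∧ ∀ z' : Pt 2 2 1, z' ∈ Omega1 X →
          Fv X z + Rv lam₁ lam₂ z ≤ Fv X z' + Rv lam₁ lam₂ z') → normPt z ≤ M :=
  stmt19_general lam₁ lam₂ X hX zs hzs1 hzsmin b2hat hb2' hb2 zh hzh
end
end
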